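/- arXiv:1102.3932 — 4 statements merged into one kernel-verified Lean document; each statement's English description precedes it below -/
import Mathlib

section
/- Let x be an infinite binary word and a a single letter in {0,1}. Then x is overlap-free if and only if μ(x) is overlap-free, where μ is the Thue–Morse morphism. -/
/-- An overlap: a word of the form a x a x a, with `a` a single letter. -/
def Overlap (w : List (Fin 2)) : Prop :=
  ∃ (a : Fin 2) (x : List (Fin 2)), w = [a] ++ x ++ [a] ++ x ++ [a]

/-- `w` occurs as a (contiguous) factor of the infinite word `x`. -/
def FactorOf (w : List (Fin 2)) (x : ℕ → Fin 2) : Prop :=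
  ∃ i, w = (List.range w.length).map (fun j => x (i + j))

/-- An infinite binary word is overlap-free if no finite factor is an overlap. -/
def OverlapFree (x : ℕ → Fin 2) : Prop :=
  ∀ w, FactorOf w x → ¬ Overlap w

/-- The Thue–Morse morphism applied to an infinite word. -/
def mu (x : ℕ → Fin 2) : ℕ → Fin 2 :=
  fun n => if n % 2 = 0 then x (n / 2) else 1 - x (n / 2)

/-- Prepend a finite word to an infinite word. -/
def prepend (p : List (Fin 2)) (w : ℕ → Fin 2) : ℕ → Fin 2 :=
  fun n => if h : n < p.length then p.get ⟨n, h⟩ else w (n - p.length)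

/-- `x` begins with the finite word `p`. -/
def BeginsWith (x : ℕ → Fin 2) (p : List (Fin 2)) : Prop :=
  ∀ i < p.length, x i = p.getD i 0

/-!
An overlap of period `t` is a factor of length `2t + 1` that agrees with its shift by `t`.
The morphism `μ` doubles positions, so it turns an overlap of period `t` of `x` into one of
period `2t` of `μ x`, and an overlap of `μ x` of even period `2t` comes back from one of period
`t` of `x`, because `μ x` is determined by its letters at even positions. An overlap of `μ x` of
odd period `q` is impossible: the two letters of each block `μ x (2k), μ x (2k+1)` differ, and
the shift by `q` carries these blocks onto the pairs of adjacent letters straddling two blocks,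
so the overlap would alternate; but then its letters at distance `q` would differ.
-/

section Factor

variable {α : Type*} (y : ℕ → α)

def factor (i n : ℕ) : List α := (List.range n).map fun j => y (i + j)

@[simp] lemma length_factor (i n : ℕ) : (factor y i n).length = n := by simp [factor]

lemma factor_one (i : ℕ) : factor y i 1 = [y i] := by simp [factor]

lemma factor_add (i m n : ℕ) : factor y i (m + n) = factor y i m ++ factor y (i + m) n := by
  simp [factor, List.range_add, add_assoc]

lemma factor_eq_factor_iff {i k n : ℕ} :
    factor y i n = factor y k n ↔ ∀ j < n, y (i + j) = y (k + j) := by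
  simp [factor, List.map_inj_left]

lemma factor_eq_append {i n : ℕ} {w₁ w₂ : List α} (h : factor y i n = w₁ ++ w₂) :
    factor y i w₁.length = w₁ ∧ factor y (i + w₁.length) w₂.length = w₂ := by
  have hn : n = w₁.length + w₂.length := by simpa using congrArg List.length h
  rw [hn, factor_add] at h
  exact List.append_inj h (length_factor ..)

def IsOverlapAt (p t : ℕ) : Prop := 0 < t ∧ ∀ j ≤ t, y (p + j) = y (p + t + j)

lemma isOverlapAt_iff {p t : ℕ} :
    IsOverlapAt y p t ↔ 0 < t ∧ factor y p (t + 1) = factor y (p + t) (t + 1) := by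
  simp [IsOverlapAt, factor_eq_factor_iff]

end Factor

lemma IsOverlapAt.overlap_factor {y : ℕ → Fin 2} {p t : ℕ} (h : IsOverlapAt y p t) :
    Overlap (factor y p (2 * t + 1)) := by
  obtain ⟨s, rfl⟩ : ∃ s, t = s + 1 := ⟨t - 1, by have := h.1; omega⟩
  have hshift := ((isOverlapAt_iff y).1 h).2
  have hend : y (p + (1 + s)) = y p := by simpa [add_comm s] using (h.2 0 (by omega)).symm
  have hhead : factor y p (s + 1 + 1) = [y p] ++ factor y (p + 1) s ++ [y p] := by
    rw [add_comm s, factor_add, factor_add, factor_one, factor_one, hend]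
  refine ⟨y p, factor y (p + 1) s, ?_⟩
  rw [show 2 * (s + 1) + 1 = (s + 1) + (s + 1 + 1) by omega, factor_add, ← hshift, hhead,
    add_comm s, factor_add, factor_one]
  simp

lemma exists_isOverlapAt_of_overlap_factor {y : ℕ → Fin 2} {i n : ℕ}
    (h : Overlap (factor y i n)) : ∃ t, IsOverlapAt y i t := by
  obtain ⟨a, v, hv⟩ := h
  have hleft := (factor_eq_append y (hv.trans (by simp : _ = ([a] ++ v ++ [a]) ++ (v ++ [a])))).1
  have hright := (factor_eq_append y (hv.trans (by simp : _ = ([a] ++ v) ++ ([a] ++ v ++ [a])))).2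
  refine ⟨v.length + 1, (isOverlapAt_iff y).2 ⟨by omega, ?_⟩⟩
  simp only [List.length_append, List.length_singleton, add_comm 1] at hleft hright
  rw [hleft, hright]

lemma overlapFree_iff_forall_not_isOverlapAt (y : ℕ → Fin 2) :
    OverlapFree y ↔ ∀ p t, ¬ IsOverlapAt y p t := by
  constructor
  · exact fun hy p t h => hy _ ⟨p, by rw [length_factor]; rfl⟩ h.overlap_factor
  · rintro hy w ⟨i, hi⟩ hw
    obtain ⟨t, ht⟩ := exists_isOverlapAt_of_overlap_factor (y := y) (hi ▸ hw)
    exact hy i t ht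

lemma eq_iff_even_of_forall_succ_ne {y : ℕ → Fin 2} {p n : ℕ}
    (hy : ∀ j < n, y (p + j + 1) ≠ y (p + j)) : ∀ j ≤ n, (y (p + j) = y p ↔ Even j) := by
  intro j hj
  induction j with
  | zero => simp
  | succ j ih =>
    have key : ∀ a b c : Fin 2, a ≠ b → (a = c ↔ ¬ b = c) := by decide
    rw [← add_assoc, key _ _ _ (hy j (by omega)), ih (by omega), Nat.even_add_one]

lemma not_isOverlapAt_of_odd {y : ℕ → Fin 2} (hy : ∀ k, y (2 * k + 1) ≠ y (2 * k))
    {p q : ℕ} (hq : Odd q) : ¬ IsOverlapAt y p q := by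
  rintro ⟨-, hper⟩
  have hshift : ∀ i, p ≤ i → i ≤ p + q → y i = y (i + q) := fun i h₁ h₂ => by
    obtain ⟨j, rfl⟩ := Nat.exists_eq_add_of_le h₁
    rw [hper j (by omega), add_right_comm]
  have halt : ∀ j < 2 * q, y (p + j + 1) ≠ y (p + j) := by
    intro j hj
    obtain ⟨k, hk | hk⟩ := Nat.even_or_odd' (p + j)
    · rw [hk]; exact hy k
    obtain ⟨l, rfl⟩ := hq
    by_cases hj' : j < 2 * l + 1
    · rw [hshift (p + j + 1) (by omega) (by omega), hshift (p + j) (by omega) (by omega), hk,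
        show 2 * k + 1 + 1 + (2 * l + 1) = 2 * (k + l + 1) + 1 by ring,
        show 2 * k + 1 + (2 * l + 1) = 2 * (k + l + 1) by ring]
      exact hy _
    · obtain ⟨m, rfl⟩ : ∃ m, k = l + m := Nat.exists_eq_add_of_le (by omega)
      rw [hk, show 2 * (l + m) + 1 = 2 * m + (2 * l + 1) by ring,
        show 2 * m + (2 * l + 1) + 1 = 2 * m + 1 + (2 * l + 1) by ring,
        ← hshift _ (by omega) (by omega), ← hshift _ (by omega) (by omega)]
      exact hy m
  have hparity := eq_iff_even_of_forall_succ_ne (fun j hj => halt j (by omega)) q le_rfl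
  have hperiod : y (p + q) = y p := by simpa using (hper 0 (Nat.zero_le q)).symm
  exact Nat.not_even_iff_odd.2 hq (hparity.1 hperiod)

section Mu

variable (x : ℕ → Fin 2)

@[simp] lemma mu_two_mul (m : ℕ) : mu x (2 * m) = x m := by
  simp [mu]

@[simp] lemma mu_two_mul_add_one (m : ℕ) : mu x (2 * m + 1) = 1 - x m := by
  simp [mu, Nat.add_mod, Nat.add_div]

lemma mu_two_mul_add_one_ne (m : ℕ) : mu x (2 * m + 1) ≠ mu x (2 * m) := by
  simpa using (by decide : ∀ a : Fin 2, 1 - a ≠ a) (x m)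

variable {x}

lemma IsOverlapAt.map_mu {p t : ℕ} (h : IsOverlapAt x p t) :
    IsOverlapAt (mu x) (2 * p) (2 * t) := by
  refine ⟨by have := h.1; omega, fun j hj => ?_⟩
  obtain ⟨k, rfl | rfl⟩ := Nat.even_or_odd' j
  · rw [show 2 * p + 2 * t + 2 * k = 2 * (p + t + k) by ring, ← mul_add, mu_two_mul,
      mu_two_mul, h.2 k (by omega)]
  · rw [show 2 * p + 2 * t + (2 * k + 1) = 2 * (p + t + k) + 1 by ring,
      show 2 * p + (2 * k + 1) = 2 * (p + k) + 1 by ring, mu_two_mul_add_one,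
      mu_two_mul_add_one, h.2 k (by omega)]

lemma IsOverlapAt.of_map_mu {p t : ℕ} (h : IsOverlapAt (mu x) p (2 * t)) :
    IsOverlapAt x (p / 2) t := by
  refine ⟨by have := h.1; omega, fun j hj => ?_⟩
  have hj := h.2 (2 * j) (by omega)
  obtain ⟨k, rfl | rfl⟩ := Nat.even_or_odd' p
  · rw [show 2 * k + 2 * t + 2 * j = 2 * (k + t + j) by ring, ← mul_add, mu_two_mul,
      mu_two_mul] at hj
    simpa using hj
  · rw [show 2 * k + 1 + 2 * t + 2 * j = 2 * (k + t + j) + 1 by ring,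
      show 2 * k + 1 + 2 * j = 2 * (k + j) + 1 by ring, mu_two_mul_add_one,
      mu_two_mul_add_one, sub_right_inj] at hj
    simpa [Nat.add_div] using hj

end Mu

theorem muInf_overlapFree_iff_general (x : ℕ → Fin 2) :
    OverlapFree x ↔ OverlapFree (mu x) := by
  simp only [overlapFree_iff_forall_not_isOverlapAt]
  constructor
  · intro hx p q hq
    obtain ⟨t, rfl⟩ | hodd := Nat.even_or_odd q
    · exact hx _ _ (IsOverlapAt.of_map_mu (two_mul t ▸ hq))
    · exact not_isOverlapAt_of_odd (mu_two_mul_add_one_ne x) hodd hq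
  · exact fun hmu p t ht => hmu _ _ ht.map_mu

theorem muInf_overlapFree_iff (x : ℕ → Fin 2) (a : Fin 2) :
    OverlapFree x ↔ OverlapFree (mu x) :=
  muInf_overlapFree_iff_general x
end

section
/- For every infinite binary word x, the infinite word 1·x is overlap-free if and only if the infinite word 1·0·μ(x) is overlap-free. -/
theorem getElem?_map_range {α : Type*} (f : ℕ → α) (n i : ℕ) :
    ((List.range n).map f)[i]? = if i < n then some (f i) else none := by
  split_ifs with h <;> simp [h]

/-- `y` contains the overlap `y p ⋯ y (p + 2m)`, of period `m`. -/
def HasOverlapAt (y : ℕ → Fin 2) (p m : ℕ) : Prop :=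
  0 < m ∧ ∀ i ≤ m, y (p + i) = y (p + i + m)

theorem Overlap.exists_period {w : List (Fin 2)} (h : Overlap w) :
    ∃ m, 0 < m ∧ w.length = 2 * m + 1 ∧ ∀ i ≤ m, w[i]? = w[i + m]? := by
  obtain ⟨a, x, rfl⟩ := h
  refine ⟨x.length + 1, by omega, ?_, fun i hi => ?_⟩
  · simp only [List.length_append, List.length_singleton]
    omega
  simp only [List.append_assoc, List.getElem?_append, List.length_cons, List.length_nil]
  grind

theorem overlap_map_range_of_periodic {f : ℕ → Fin 2} {m : ℕ} (hm : 0 < m)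
    (h : ∀ i ≤ m, f i = f (i + m)) : Overlap ((List.range (2 * m + 1)).map f) := by
  refine ⟨f 0, (List.range (m - 1)).map (fun j => f (j + 1)), List.ext_getElem? fun n => ?_⟩
  have shift : m ≤ n → n ≤ 2 * m → f (n - m) = f n := fun h₁ h₂ => by
    rw [h (n - m) (by omega), Nat.sub_add_cancel h₁]
  simp only [List.append_assoc, List.getElem?_append, getElem?_map_range,
    List.length_cons, List.length_nil, List.length_map, List.length_range, List.getElem?_singleton]
  grind

theorem overlapFree_iff_not_exists_hasOverlapAt {y : ℕ → Fin 2} :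
    OverlapFree y ↔ ¬ ∃ p m, HasOverlapAt y p m := by
  constructor
  · rintro hy ⟨p, m, hm, hper⟩
    refine hy ((List.range (2 * m + 1)).map fun i => y (p + i)) ⟨p, by simp⟩
      (overlap_map_range_of_periodic hm fun i hi => ?_)
    simpa only [add_assoc] using hper i hi
  · rintro hy w ⟨p, hw⟩ hov
    obtain ⟨m, hm, hlen, hper⟩ := hov.exists_period
    refine hy ⟨p, m, hm, fun i hi => ?_⟩
    have := hper i hi
    rw [hw, getElem?_map_range, getElem?_map_range, if_pos (by omega), if_pos (by omega)] at this
    simpa only [add_assoc] using Option.some.inj this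

theorem one_sub_ne_self_fin_two (a : Fin 2) : 1 - a ≠ a := by
  fin_cases a <;> decide

theorem mu_eq_mu_iff {y : ℕ → Fin 2} {n n' : ℕ} (h : n % 2 = n' % 2) :
    mu y n = mu y n' ↔ y (n / 2) = y (n' / 2) := by
  unfold mu
  rw [← h]
  split_ifs
  · rfl
  · exact sub_right_inj

theorem mu_succ_of_even {y : ℕ → Fin 2} {n : ℕ} (hn : n % 2 = 0) :
    mu y (n + 1) = 1 - mu y n := by
  simp [mu, hn, Nat.succ_mod_two_eq_one_iff.mpr hn, show (n + 1) / 2 = n / 2 by omega]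

theorem HasOverlapAt.to_mu {y : ℕ → Fin 2} {p m : ℕ} (h : HasOverlapAt y p m) :
    HasOverlapAt (mu y) (2 * p) (2 * m) := by
  refine ⟨by linarith [h.1], fun i hi => (mu_eq_mu_iff (by omega)).mpr ?_⟩
  convert h.2 (i / 2) (by omega) using 2 <;> omega

theorem HasOverlapAt.of_mu {y : ℕ → Fin 2} {p M : ℕ} (h : HasOverlapAt (mu y) p (2 * M)) :
    HasOverlapAt y (p / 2) M := by
  refine ⟨by linarith [h.1], fun i hi => ?_⟩
  have := h.2 (2 * i) (by omega)
  rw [mu_eq_mu_iff (by omega)] at this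
  convert this using 2 <;> omega

theorem apply_ne_apply_zero_of_alternating {f : ℕ → Fin 2} {k : ℕ}
    (hf : ∀ i < k, f (i + 1) = 1 - f i) (hk : Odd k) : f k ≠ f 0 := by
  obtain ⟨M, rfl⟩ := hk
  have hf_even : ∀ j ≤ M, f (2 * j) = f 0 := by
    intro j hj
    induction j with
    | zero => rfl
    | succ j ih =>
      rw [show 2 * (j + 1) = 2 * j + 1 + 1 by ring, hf _ (by omega), hf _ (by omega),
        sub_sub_cancel, ih (by omega)]
  rw [hf _ (by omega), hf_even M le_rfl]
  exact one_sub_ne_self_fin_two _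

theorem not_hasOverlapAt_mu_of_odd {y : ℕ → Fin 2} {p m : ℕ} (hm : Odd m) :
    ¬ HasOverlapAt (mu y) p m := by
  rintro ⟨-, hper⟩
  refine apply_ne_apply_zero_of_alternating (f := fun i => mu y (p + i)) (fun i hi => ?_) hm
    (hper 0 m.zero_le).symm
  rcases Nat.mod_two_eq_zero_or_one (p + i) with h | h
  · exact mu_succ_of_even h
  · -- `m` is odd, so the position `p + i + m` is even.
    have heven : (p + i + m) % 2 = 0 := by obtain ⟨k, rfl⟩ := hm; omega
    calc mu y (p + (i + 1)) = mu y (p + i + m + 1) := by rw [hper (i + 1) hi]; ring_nf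
      _ = 1 - mu y (p + i + m) := mu_succ_of_even heven
      _ = 1 - mu y (p + i) := by rw [hper i hi.le]

theorem exists_hasOverlapAt_mu_iff {y : ℕ → Fin 2} :
    (∃ p m, HasOverlapAt (mu y) p m) ↔ ∃ p m, HasOverlapAt y p m := by
  constructor
  · rintro ⟨p, m, h⟩
    rcases Nat.even_or_odd m with ⟨M, rfl⟩ | hm
    · exact ⟨p / 2, M, HasOverlapAt.of_mu (by rwa [two_mul])⟩
    · exact absurd h (not_hasOverlapAt_mu_of_odd hm)
  · rintro ⟨p, m, h⟩
    exact ⟨_, _, h.to_mu⟩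

theorem overlapFree_mu_iff {y : ℕ → Fin 2} : OverlapFree (mu y) ↔ OverlapFree y := by
  rw [overlapFree_iff_not_exists_hasOverlapAt, overlapFree_iff_not_exists_hasOverlapAt,
    exists_hasOverlapAt_mu_iff]

theorem prepend_one_zero_mu (x : ℕ → Fin 2) : prepend [1, 0] (mu x) = mu (prepend [1] x) := by
  funext n
  rcases n with _ | _ | n
  · rfl
  · rfl
  · simp [prepend, mu, show (n + 2) / 2 = n / 2 + 1 by omega,
      show (n + 1 + 1) % 2 = n % 2 by omega]

theorem one_x_iff_one_zero_mu (x : ℕ → Fin 2) :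
    OverlapFree (prepend [1] x) ↔ OverlapFree (prepend [1, 0] (mu x)) := by
  rw [prepend_one_zero_mu, overlapFree_mu_iff]
end

section
/- For every infinite binary word x, the infinite word 1·0·0·μ(x) contains an overlap as a factor; equivalently, there is no infinite binary word x such that 100·μ(x) is overlap-free. -/
theorem no_overlapFree_100_mu (x : ℕ → Fin 2) :
    ¬ OverlapFree (prepend [1, 0, 0] (mu x)) := by
  intro hfree
  obtain hx₀ | hx₀ : x 0 = 0 ∨ x 0 = 1 := by omega
  · exact hfree [0, 0, 0] ⟨1, by simp [prepend, mu, hx₀, List.range_succ]⟩ ⟨0, [], rfl⟩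
  obtain hx₁ | hx₁ : x 1 = 0 ∨ x 1 = 1 := by omega
  · exact hfree [1, 0, 0, 1, 0, 0, 1] ⟨0, by simp [prepend, mu, hx₀, hx₁, List.range_succ]⟩
      ⟨1, [0, 0], rfl⟩
  · exact hfree [0, 1, 0, 1, 0] ⟨2, by simp [prepend, mu, hx₀, hx₁, List.range_succ]⟩
      ⟨0, [1], rfl⟩
end

section
/- For every infinite binary word x, the infinite word 0·1·1·μ(x) contains an overlap as a factor; equivalently, there is no infinite binary word x such that 011·μ(x) is overlap-free. -/
/-!
The word `011·μ(x)` begins with `011·μ(x₀x₁)`. If `x₀ = 1` this prefix is `01110…` and contains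
`111`; otherwise it is `0110101`, containing `10101`, or `0110110`, itself an overlap.
-/

def muList (w : List (Fin 2)) : List (Fin 2) :=
  w.flatMap fun a => [a, 1 - a]

@[simp]
theorem muList_cons (a : Fin 2) (w : List (Fin 2)) :
    muList (a :: w) = a :: (1 - a) :: muList w := rfl

@[simp]
theorem length_muList (w : List (Fin 2)) : (muList w).length = 2 * w.length := by
  induction w with
  | nil => rfl
  | cons a w ih => simp only [muList_cons, List.length_cons, ih]; ring

theorem getD_muList (w : List (Fin 2)) {i : ℕ} (hi : i < 2 * w.length) :
    (muList w).getD i 0 = mu (w.getD · 0) i := by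
  induction w generalizing i with
  | nil => simp at hi
  | cons a w ih =>
    match i with
    | 0 => rfl
    | 1 => rfl
    | i + 2 =>
      rw [muList_cons, List.getD_cons_succ, List.getD_cons_succ,
        ih (by simp only [List.length_cons] at hi; omega)]
      simp only [mu, Nat.add_mod_right, Nat.add_div_right _ two_pos, List.getD_cons_succ]

theorem BeginsWith.mu {x : ℕ → Fin 2} {w : List (Fin 2)} (h : BeginsWith x w) :
    BeginsWith (mu x) (muList w) := by
  intro i hi
  rw [length_muList] at hi
  rw [getD_muList w hi, _root_.mu, _root_.mu, h (i / 2) (by omega)]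

theorem BeginsWith.prepend {x : ℕ → Fin 2} {w : List (Fin 2)} (h : BeginsWith x w)
    (p : List (Fin 2)) : BeginsWith (prepend p x) (p ++ w) := by
  intro i hi
  by_cases hip : i < p.length
  · rw [List.getD_append _ _ _ _ hip, List.getD_eq_getElem _ _ hip]
    simp [_root_.prepend, hip]
  · rw [List.length_append] at hi
    rw [List.getD_append_right _ _ _ _ (not_lt.1 hip), ← h _ (by omega)]
    simp [_root_.prepend, hip]

theorem beginsWith_map_range (x : ℕ → Fin 2) (n : ℕ) : BeginsWith x ((List.range n).map x) := by
  intro i hi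
  rw [List.getD_eq_getElem _ _ hi]
  simp

theorem BeginsWith.factorOf {x : ℕ → Fin 2} {u w v : List (Fin 2)}
    (h : BeginsWith x (u ++ w ++ v)) : FactorOf w x := by
  refine ⟨u.length, List.ext_getElem (by simp) fun j hj _ => ?_⟩
  rw [List.getElem_map, List.getElem_range, h _ (by simp only [List.length_append]; omega), List.append_assoc,
    List.getD_append_right _ _ _ _ (by omega), Nat.add_sub_cancel_left,
    List.getD_append _ _ _ _ hj, List.getD_eq_getElem _ _ hj]

theorem OverlapFree.not_beginsWith {x : ℕ → Fin 2} (hx : OverlapFree x) {w : List (Fin 2)}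
    (hw : Overlap w) (u v : List (Fin 2)) : ¬ BeginsWith x (u ++ w ++ v) :=
  fun h => hx w h.factorOf hw

theorem no_overlapFree_011_mu (x : ℕ → Fin 2) :
    ¬ OverlapFree (prepend [0, 1, 1] (mu x)) := by
  intro h
  have hb : BeginsWith (prepend [0, 1, 1] (mu x)) ([0, 1, 1] ++ muList [x 0, x 1]) :=
    ((beginsWith_map_range x 2).mu).prepend _
  obtain h0 | h0 : x 0 = 0 ∨ x 0 = 1 := by omega
  · obtain h1 | h1 : x 1 = 0 ∨ x 1 = 1 := by omega
    · rw [h0, h1] at hb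
      exact h.not_beginsWith ⟨1, [0], rfl⟩ [0, 1] [] hb
    · rw [h0, h1] at hb
      exact h.not_beginsWith ⟨0, [1, 1], rfl⟩ [] [] hb
  · rw [h0] at hb
    exact h.not_beginsWith ⟨1, [], rfl⟩ [0] [0, x 1, 1 - x 1] hb
end
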